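/- arXiv:1812.02544 — 2 statements merged into one kernel-verified Lean document; each statement's English description precedes it below -/
import Mathlib

section
/- For every k ∈ {1,…,n}, the derivative of the function z ↦ det(z·1 − L̃) at the point z = λ_k equals m · λ_k^{m−1} · ∏_{ℓ≠k} (λ_k^m − λ_ℓ^m). -/
open Matrix BigOperators

noncomputable section

/-- The block matrix `L̃` with diagonal blocks `Λ = diag(λ₁,…,λₙ)` at positions `(h, h+1)`:
its entry in row `(h,j)` and column `(i,k)` is `λⱼ` if `k = j` and `i = h + 1` in `ℤ/mℤ`,
and `0` otherwise. -/
def Ltilde (m n : ℕ) (lam : Fin n → ℂ) :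
    Matrix (ZMod m × Fin n) (ZMod m × Fin n) ℂ :=
  Matrix.of fun p q => if q.2 = p.2 ∧ q.1 = p.1 + 1 then lam p.2 else 0

/-!
The matrix `L̃` is block diagonal, with one block `λⱼ • P` for each `j`, where `P` is the
permutation matrix of the cyclic shift `h ↦ h + 1` of `ℤ/mℤ`. Only the identity and the shift
contribute to the Leibniz expansion of `det (z • 1 - a • P)`, which therefore equals
`z ^ m - a ^ m`. Hence `det (z • 1 - L̃) = ∏ⱼ (z ^ m - λⱼ ^ m)`, and at `z = λₖ` the product rule
leaves only the term in which the vanishing factor `z ^ m - λₖ ^ m` is differentiated.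
-/

open Equiv Equiv.Perm Finset

namespace Equiv.Perm

variable {α : Type*} [Fintype α] [DecidableEq α]

theorem eq_one_or_eq_of_forall_apply_eq_or_eq {σ τ : Perm α} (hτ : τ.IsCycle)
    (hsupp : τ.support = univ) (h : ∀ x, σ x = x ∨ σ x = τ x) : σ = 1 ∨ σ = τ := by
  have hmoved : ∀ x, τ x ≠ x := fun x => mem_support.mp (hsupp ▸ mem_univ x)
  refine or_iff_not_imp_left.mpr fun hσ => ?_
  obtain ⟨x, hx⟩ : ∃ x, σ x ≠ x := by
    by_contra! hfix
    exact hσ (ext hfix)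
  have hagree : ∀ k : ℕ, σ ((τ ^ k) x) = τ ((τ ^ k) x) := by
    intro k
    induction k with
    | zero => simpa using (h x).resolve_left hx
    | succ k ih =>
      rw [pow_succ', mul_apply]
      refine (h _).resolve_left fun hfix => hmoved ((τ ^ k) x) (σ.injective ?_)
      rw [hfix, ih]
  ext y
  obtain ⟨k, rfl⟩ := (hτ.sameCycle (hmoved x) (hmoved y)).exists_nat_pow_eq
  exact hagree k

end Equiv.Perm

namespace Matrix

variable {α R : Type*} [Fintype α] [DecidableEq α] [CommRing R]

theorem det_smul_one_sub_smul_permMatrix {τ : Perm α} (hτ : τ.IsCycle)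
    (hsupp : τ.support = univ) (z a : R) :
    det (z • (1 : Matrix α α R) - a • τ.permMatrix R) =
      z ^ Fintype.card α - a ^ Fintype.card α := by
  set M := z • (1 : Matrix α α R) - a • τ.permMatrix R
  have hmoved : ∀ x, τ x ≠ x := fun x => mem_support.mp (hsupp ▸ mem_univ x)
  have hM : ∀ i j, M i j = (if i = j then z else 0) - (if τ i = j then a else 0) := by
    intro i j
    simp [M, one_apply]
  have hvanish : ∀ σ ∉ ({1, τ⁻¹} : Finset (Perm α)), ∏ i, M (σ i) i = 0 := by
    intro σ hσ
    by_contra hprod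
    have hσ' : ∀ i, σ i = i ∨ σ i = τ⁻¹ i := by
      intro i
      have hi : M (σ i) i ≠ 0 := fun h0 => hprod (prod_eq_zero (mem_univ i) h0)
      rw [hM] at hi
      rw [eq_inv_iff_eq]
      by_contra! hne
      simp [hne.1, hne.2] at hi
    exact hσ (by simpa using
      eq_one_or_eq_of_forall_apply_eq_or_eq hτ.inv (by rw [support_inv, hsupp]) hσ')
  have hdiag : ∏ i, M i i = z ^ Fintype.card α := by
    simp [hM, hmoved]
  have hcycle : ∏ i, M (τ⁻¹ i) i = (-a) ^ Fintype.card α := by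
    have hmoved' : ∀ x, τ.symm x ≠ x := fun x h => hmoved x (by simpa using congrArg τ h.symm)
    simp [hM, hmoved']
  rw [det_apply, ← sum_subset (subset_univ _) fun σ _ hσ => by rw [hvanish σ hσ, smul_zero],
    sum_pair (Ne.symm (inv_ne_one.mpr hτ.ne_one)), Perm.sign_one, one_smul]
  simp only [Perm.one_apply]
  rw [hdiag, hcycle, sign_inv, hτ.sign, hsupp, card_univ, Units.smul_def, zsmul_eq_mul,
    neg_pow a]
  push_cast
  rw [neg_mul, ← mul_assoc, ← mul_pow, neg_one_mul, neg_neg, one_pow, one_mul, ← sub_eq_add_neg]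

end Matrix

theorem ZMod.isCycle_addRight_one {m : ℕ} [Fact (1 < m)] :
    (Equiv.addRight (1 : ZMod m)).IsCycle :=
  ⟨0, by simp, fun y _ => ⟨y.val, by simp⟩⟩

theorem ZMod.support_addRight_one {m : ℕ} [Fact (1 < m)] :
    (Equiv.addRight (1 : ZMod m)).support = univ := by
  ext x
  simp

theorem ZMod.det_smul_one_sub_smul_permMatrix_addRight_one {R : Type*} [CommRing R] (m : ℕ)
    [NeZero m] (z a : R) :
    det (z • (1 : Matrix (ZMod m) (ZMod m) R) - a • (Equiv.addRight (1 : ZMod m)).permMatrix R) =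
      z ^ m - a ^ m := by
  obtain rfl | hm := (NeZero.one_le : 1 ≤ m).eq_or_lt
  · rw [Subsingleton.elim (Equiv.addRight (1 : ZMod 1)) 1, permMatrix_one, ← sub_smul, det_smul,
      det_one]
    simp
  · have : Fact (1 < m) := ⟨hm⟩
    rw [det_smul_one_sub_smul_permMatrix ZMod.isCycle_addRight_one ZMod.support_addRight_one,
      ZMod.card]

theorem Ltilde_eq_blockDiagonal (m n : ℕ) (lam : Fin n → ℂ) :
    Ltilde m n lam =
      blockDiagonal fun j => lam j • (Equiv.addRight (1 : ZMod m)).permMatrix ℂ := by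
  ext ⟨h, j⟩ ⟨i, l⟩
  by_cases hjl : j = l
  · subst hjl
    simp [Ltilde, eq_comm]
  · simp [Ltilde, blockDiagonal_apply_ne _ _ _ hjl, Ne.symm hjl]

theorem det_smul_one_sub_Ltilde (m n : ℕ) [NeZero m] (lam : Fin n → ℂ) (z : ℂ) :
    det (z • (1 : Matrix (ZMod m × Fin n) (ZMod m × Fin n) ℂ) - Ltilde m n lam) =
      ∏ j, (z ^ m - lam j ^ m) := by
  rw [Ltilde_eq_blockDiagonal, ← blockDiagonal_one, ← blockDiagonal_smul, ← blockDiagonal_sub,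
    det_blockDiagonal]
  exact prod_congr rfl fun j _ => ZMod.det_smul_one_sub_smul_permMatrix_addRight_one m z (lam j)

theorem HasDerivAt.fun_finsetProd_of_eq_zero {ι 𝕜 𝔸 : Type*} [DecidableEq ι]
    [NontriviallyNormedField 𝕜] [NormedCommRing 𝔸] [NormedAlgebra 𝕜 𝔸] {u : Finset ι}
    {f : ι → 𝕜 → 𝔸} {f' : ι → 𝔸} {x : 𝕜} {k : ι} (hf : ∀ i ∈ u, HasDerivAt (f i) (f' i) x)
    (hk : k ∈ u) (hfk : f k x = 0) :
    HasDerivAt (∏ i ∈ u, f i ·) (f' k * ∏ i ∈ u.erase k, f i x) x := by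
  convert HasDerivAt.fun_finsetProd hf using 1
  rw [sum_eq_single_of_mem k hk, smul_eq_mul, mul_comm]
  intro i _ hik
  rw [prod_eq_zero (mem_erase.mpr ⟨Ne.symm hik, hk⟩) hfk, zero_smul]

theorem deriv_charpoly_at_eigenvalue_general (m n : ℕ) [NeZero m]
    (lam : Fin n → ℂ) (k : Fin n) :
    deriv (fun z : ℂ =>
        (z • (1 : Matrix (ZMod m × Fin n) (ZMod m × Fin n) ℂ) - Ltilde m n lam).det)
      (lam k) =
      (m : ℂ) * lam k ^ (m - 1) * ∏ l ∈ Finset.univ.erase k, (lam k ^ m - lam l ^ m) := by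
  simp_rw [det_smul_one_sub_Ltilde]
  exact (HasDerivAt.fun_finsetProd_of_eq_zero
    (fun l _ => (hasDerivAt_pow m (lam k)).sub_const (lam l ^ m)) (mem_univ k) (sub_self _)).deriv

/-- The derivative of `z ↦ det(z·1 − L̃)` at `z = λₖ` equals
`m · λₖ^{m−1} · ∏_{ℓ≠k} (λₖ^m − λ_ℓ^m)`. -/
theorem deriv_charpoly_at_eigenvalue (m n : ℕ) [NeZero m] (hn : 0 < n)
    (lam : Fin n → ℂ) (k : Fin n) :
    deriv (fun z : ℂ =>
        (z • (1 : Matrix (ZMod m × Fin n) (ZMod m × Fin n) ℂ) - Ltilde m n lam).det)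
      (lam k) =
      (m : ℂ) * lam k ^ (m - 1) * ∏ l ∈ Finset.univ.erase k, (lam k ^ m - lam l ^ m) :=
  deriv_charpoly_at_eigenvalue_general m n lam k
end
end

section
/- For every k ∈ {1,…,n} one has D(λ_k) = φ_k · A′(λ_k); equivalently, since A′(λ_k) ≠ 0, φ_k = D(λ_k)/A′(λ_k). (This is the spin case of the theorem that the conjugate variables φ_k are given by the rational function r(z) = D(z)/A′(z) evaluated at the eigenvalues λ_k.) -/
open Matrix BigOperators

noncomputable section

/-- `|g| = g₀ + g₁ + ⋯ + g_{m-1}`. -/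
def gAbs (m : ℕ) (g : ZMod m → ℂ) : ℂ :=
  ∑ s ∈ Finset.range m, g (s : ZMod m)

/-- `cᵢ = Σ_{r=0}^{i} g_r − Σ_{s=0}^{m−1} ((m−s)/m)·g_s`, the index `i` read modulo `m`. -/
def cConst (m : ℕ) (g : ZMod m → ℂ) (i : ZMod m) : ℂ :=
  (∑ r ∈ Finset.range (i.val + 1), g (r : ZMod m)) -
    ∑ s ∈ Finset.range m, (((m : ℂ) - (s : ℂ)) / (m : ℂ)) * g (s : ZMod m)

/-- The spin matrix `Q̃` built from `V i = ṽᵢ·w̃ᵢ`: its entry in row `(h,j)` and column `(i,k)`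
vanishes unless `h = i + 1` in `ℤ/mℤ`, in which case (taking the representative
`i ∈ {0,…,m−1}`) it equals
`φⱼ + (1/λⱼ)·(cᵢ + Σ_{r=0}^{i}(V_r)ⱼⱼ − Σ_{s=0}^{m−1}((m−s)/m)·(V_s)ⱼⱼ)` if `k = j`, and
`−Σ_{h′=0}^{m−1}(V_{i−h′})ⱼₖ·λⱼ^{m−h′−1}·λₖ^{h′}/(λⱼ^m − λₖ^m)` if `k ≠ j`. -/
def QtildeS (m n : ℕ) (g : ZMod m → ℂ) (lam phi : Fin n → ℂ)
    (V : ZMod m → Matrix (Fin n) (Fin n) ℂ) :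
    Matrix (ZMod m × Fin n) (ZMod m × Fin n) ℂ :=
  Matrix.of fun p q =>
    if p.1 = q.1 + 1 then
      if q.2 = p.2 then
        phi p.2 + (1 / lam p.2) *
          (cConst m g q.1 + (∑ r ∈ Finset.range (q.1.val + 1), (V (r : ZMod m)) p.2 p.2) -
            ∑ s ∈ Finset.range m, (((m : ℂ) - (s : ℂ)) / (m : ℂ)) * (V (s : ZMod m)) p.2 p.2)
      else
        -∑ h' ∈ Finset.range m,
          (V (q.1 - (h' : ZMod m))) p.2 q.2 * lam p.2 ^ (m - h' - 1) * lam q.2 ^ h' /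
            (lam p.2 ^ m - lam q.2 ^ m)
    else 0

/-- `A(z) = det(z·1 − L̃)`. -/
def Afun (m n : ℕ) [NeZero m] (lam : Fin n → ℂ) (z : ℂ) : ℂ :=
  (z • (1 : Matrix (ZMod m × Fin n) (ZMod m × Fin n) ℂ) - Ltilde m n lam).det

/-- `D(z) = tr(Q̃ · adj(z·1 − L̃))` (spin case). -/
def DfunS (m n : ℕ) [NeZero m] (g : ZMod m → ℂ) (lam phi : Fin n → ℂ)
    (V : ZMod m → Matrix (Fin n) (Fin n) ℂ) (z : ℂ) : ℂ :=
  Matrix.trace (QtildeS m n g lam phi V *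
    (z • (1 : Matrix (ZMod m × Fin n) (ZMod m × Fin n) ℂ) - Ltilde m n lam).adjugate)

/-- The block-diagonal matrix `B` with entry `(V_h)ⱼₖ` in row `(h,j)` and column `(h,k)`,
and `0` in positions with differing first indices. -/
def Bmat (m n : ℕ) (V : ZMod m → Matrix (Fin n) (Fin n) ℂ) :
    Matrix (ZMod m × Fin n) (ZMod m × Fin n) ℂ :=
  Matrix.of fun p q => if p.1 = q.1 then (V p.1) p.2 q.2 else 0

/-- `C(z) = tr(Q̃ · adj(z·1 − L̃) · B)` (spin case). -/
def CfunS (m n : ℕ) [NeZero m] (g : ZMod m → ℂ) (lam phi : Fin n → ℂ)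
    (V : ZMod m → Matrix (Fin n) (Fin n) ℂ) (z : ℂ) : ℂ :=
  Matrix.trace (QtildeS m n g lam phi V *
    (z • (1 : Matrix (ZMod m × Fin n) (ZMod m × Fin n) ℂ) - Ltilde m n lam).adjugate *
    Bmat m n V)

/-!
Grouping the indices by `j`, `z • 1 - L̃` is block diagonal with blocks `z • 1 - λⱼ • S`, where `S`
is the cyclic shift of `ℤ/mℤ`; each block has determinant `z ^ m - λⱼ ^ m`. Hence
`A z = ∏ⱼ (z ^ m - λⱼ ^ m)` and `A' λₖ = m λₖ ^ (m - 1) ∏_{j ≠ k} (λₖ ^ m - λⱼ ^ m) ≠ 0`.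
At `z = λₖ` every block of the adjugate but the `k`-th vanishes, and all entries of the `k`-th are
`A' λₖ / m`. So `D λₖ = (A' λₖ / m) Σ_{h,i} Q̃ (h,k) (i,k)`, and this sum is `m φₖ`: only the
entries `(i + 1, i)` are nonzero, and summed over `i` both the constants `cᵢ` and the
`V`-corrections, which have the same shape, cancel.
-/

open Finset

namespace Matrix
variable {ι o α : Type*} [Fintype ι] [DecidableEq ι] [Fintype o] [DecidableEq o] [CommRing α]

theorem adjugate_eq_of_mul_eq_det_smul {A B : Matrix ι ι α} (hA : IsLeftRegular A.det)
    (h : A * B = A.det • 1) : adjugate A = B :=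
  (isRegular_of_isLeftRegular_det hA).left (show A * adjugate A = A * B by rw [mul_adjugate, h])

theorem adjugate_blockDiagonal_of_isLeftRegular (B : o → Matrix ι ι α)
    (hB : IsLeftRegular (blockDiagonal B).det) :
    adjugate (blockDiagonal B) =
      blockDiagonal fun j => (∏ j' ∈ univ.erase j, (B j').det) • adjugate (B j) := by
  refine adjugate_eq_of_mul_eq_det_smul hB ?_
  rw [← blockDiagonal_mul, det_blockDiagonal, ← blockDiagonal_one, ← blockDiagonal_smul]
  congr 1
  ext1 j
  rw [mul_smul_comm, mul_adjugate, smul_smul, prod_erase_mul _ _ (mem_univ j)]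
  rfl

/- Prove it for the blocks `X • 1 + C (B j)` over `α[X]`, whose determinants are monic, hence
regular, and specialise `X ↦ 0`. -/
theorem adjugate_blockDiagonal (B : o → Matrix ι ι α) :
    adjugate (blockDiagonal B) =
      blockDiagonal fun j => (∏ j' ∈ univ.erase j, (B j').det) • adjugate (B j) := by
  let g : Matrix ι ι α → Matrix ι ι (Polynomial α) := fun M =>
    M.map Polynomial.C + (Polynomial.X : Polynomial α) • 1
  let ev := Polynomial.evalRingHom (0 : α)
  have hg : ∀ M, ev.mapMatrix (g M) = M := fun M => by ext; simp [ev, g]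
  have hmap : ∀ G : o → Matrix ι ι (Polynomial α),
      ev.mapMatrix (blockDiagonal G) = blockDiagonal fun j => ev.mapMatrix (G j) :=
    fun G => blockDiagonal_map _ _ (map_zero ev)
  have hreg : IsLeftRegular (blockDiagonal fun j => g (B j)).det := by
    rw [det_blockDiagonal]
    refine (Polynomial.monic_prod_of_monic _ _ fun j _ => ?_).isRegular.left
    simp only [g, Polynomial.Monic.def, ← Polynomial.leadingCoeff_det_X_one_add_C (B j), add_comm]
  have h := congrArg ev.mapMatrix (adjugate_blockDiagonal_of_isLeftRegular _ hreg)
  have hsmul : ∀ (c : Polynomial α) (M : Matrix ι ι (Polynomial α)),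
      ev.mapMatrix (c • M) = ev c • ev.mapMatrix M := fun c M => by ext; simp
  simpa only [RingHom.map_adjugate, hmap, hg, hsmul, map_prod, RingHom.map_det] using h

end Matrix

section ZModPerm
variable {m : ℕ} [NeZero m]

theorem Equiv.Perm.eq_one_or_eq_addRight_one [Nontrivial (ZMod m)] {σ : Equiv.Perm (ZMod m)}
    (h : ∀ i, σ i = i ∨ σ i = i + 1) : σ = 1 ∨ σ = Equiv.addRight 1 := by
  by_cases hfix : ∃ i₀, σ i₀ = i₀
  · obtain ⟨i₀, hi₀⟩ := hfix
    have hdown : ∀ t : ℕ, σ (i₀ - t) = i₀ - t := by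
      intro t
      induction t with
      | zero => simpa using hi₀
      | succ t ih =>
        refine (h _).resolve_right fun hs => (one_ne_zero : (1 : ZMod m) ≠ 0) ?_
        have := σ.injective (hs.trans (by rw [ih]; push_cast; ring))
        push_cast at this
        linear_combination -this
    left
    ext j
    simpa [ZMod.natCast_zmod_val] using hdown (i₀ - j).val
  · push Not at hfix
    right
    ext i
    exact (h i).resolve_left (hfix i)

theorem ZMod.sign_addRight_one :
    Equiv.Perm.sign (Equiv.addRight (1 : ZMod m)) = (-1) ^ (m - 1) := by
  obtain ⟨M, rfl⟩ := Nat.exists_eq_succ_of_ne_zero (NeZero.ne m)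
  have : Equiv.addRight (1 : ZMod (M + 1)) =
      ((ZMod.finEquiv (M + 1)).toEquiv.symm.trans (finRotate (M + 1))).trans
        (ZMod.finEquiv (M + 1)).toEquiv := by
    ext i
    simp
  rw [this, Equiv.Perm.sign_symm_trans_trans, sign_finRotate]

end ZModPerm

section CycleBlock
variable {R : Type*} [CommRing R] (m : ℕ)

/-- `cycleBlock m z w = z • 1 - w • S` and
`cycleBlockAdj m z w = ∑ₜ z ^ (m - 1 - t) * w ^ t • S ^ t`, where `S` is the cyclic shift
`(S x) h = x (h + 1)`. -/
def cycleBlock (z w : R) : Matrix (ZMod m) (ZMod m) R :=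
  of fun h i => (if i = h then z else 0) - (if i = h + 1 then w else 0)

def cycleBlockAdj (z w : R) : Matrix (ZMod m) (ZMod m) R :=
  of fun h i => ∑ t ∈ range m, if i = h + t then z ^ (m - 1 - t) * w ^ t else 0

variable {m} [NeZero m]

/- Only the identity and `h ↦ h + 1` contribute to the Leibniz expansion; they coincide when
`m = 1`. -/
theorem det_cycleBlock (z w : R) : (cycleBlock m z w).det = z ^ m - w ^ m := by
  obtain rfl | hm := (Nat.one_le_iff_ne_zero.mpr (NeZero.ne m)).eq_or_lt
  · simp [det_unique, cycleBlock, Subsingleton.elim (1 : ZMod 1) 0]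
  have : Fact (1 < m) := ⟨hm⟩
  have hne : (1 : Equiv.Perm (ZMod m)) ≠ Equiv.addRight 1 := fun h => by
    simpa using congrArg (· 0) h
  rw [← det_transpose, det_apply', Fintype.sum_eq_add 1 (Equiv.addRight 1) hne]
  · have hid : ∏ i, (cycleBlock m z w)ᵀ ((1 : Equiv.Perm (ZMod m)) i) i = z ^ m := by
      simp [cycleBlock]
    have hshift : ∏ i, (cycleBlock m z w)ᵀ (Equiv.addRight 1 i) i = (-w) ^ m := by
      simp [cycleBlock]
    rw [hid, hshift, Equiv.Perm.sign_one, ZMod.sign_addRight_one]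
    push_cast
    rw [neg_pow w, ← mul_assoc, ← pow_add, show m - 1 + m = 2 * (m - 1) + 1 by omega, pow_succ,
      pow_mul, neg_one_sq, one_pow]
    ring
  · rintro σ ⟨h1, h2⟩
    obtain ⟨i, hi⟩ : ∃ i, σ i ≠ i ∧ σ i ≠ i + 1 := by
      by_contra! h
      exact (Equiv.Perm.eq_one_or_eq_addRight_one fun i => or_iff_not_imp_left.mpr (h i)).elim
        h1 h2
    rw [prod_eq_zero (mem_univ i) (by simp [cycleBlock, hi.1, hi.2]), mul_zero]

theorem cycleBlock_mul_cycleBlockAdj (z w : R) :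
    cycleBlock m z w * cycleBlockAdj m z w = (z ^ m - w ^ m) • 1 := by
  ext h i
  set f : ℕ → R := fun t => if i = h + t then z ^ (m - t) * w ^ t else 0
  have hz : z * cycleBlockAdj m z w h i = ∑ t ∈ range m, f t := by
    rw [cycleBlockAdj, of_apply, mul_sum]
    refine sum_congr rfl fun t ht => ?_
    rw [mul_ite, mul_zero, ← mul_assoc, ← pow_succ',
      show m - 1 - t + 1 = m - t by have := mem_range.mp ht; omega]
  have hw : w * cycleBlockAdj m z w (h + 1) i = ∑ t ∈ range m, f (t + 1) := by
    rw [cycleBlockAdj, of_apply, mul_sum]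
    refine sum_congr rfl fun t _ => ?_
    simp only [f, mul_ite, mul_zero, Nat.sub_sub, Nat.cast_succ, add_assoc, add_comm (1 : ZMod m)]
    congr 1
    rw [add_comm 1 t, pow_succ]
    ring
  have hrow : (cycleBlock m z w * cycleBlockAdj m z w) h i =
      z * cycleBlockAdj m z w h i - w * cycleBlockAdj m z w (h + 1) i := by
    simp [cycleBlock, mul_apply, sub_mul, ite_mul, sum_sub_distrib]
  rw [hrow, hz, hw, ← sum_sub_distrib, sum_range_sub' f m]
  obtain rfl | hih := eq_or_ne i h
  · simp [f, one_apply]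
  · simp [f, hih, hih.symm, one_apply]

theorem cycleBlock_map {S : Type*} [CommRing S] (f : R →+* S) (z w : R) :
    f.mapMatrix (cycleBlock m z w) = cycleBlock m (f z) (f w) := by
  ext h i
  simp [cycleBlock, apply_ite f]

theorem cycleBlockAdj_map {S : Type*} [CommRing S] (f : R →+* S) (z w : R) :
    f.mapMatrix (cycleBlockAdj m z w) = cycleBlockAdj m (f z) (f w) := by
  ext h i
  simp [cycleBlockAdj, apply_ite f]

/- Over `R[X]` with `z = X` the determinant `X ^ m - C w ^ m` is monic; then specialise `X ↦ z`. -/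
theorem adjugate_cycleBlock (z w : R) : adjugate (cycleBlock m z w) = cycleBlockAdj m z w := by
  let ev := Polynomial.evalRingHom z
  have hmonic : (cycleBlock m Polynomial.X (Polynomial.C w)).det.Monic := by
    rw [det_cycleBlock, ← Polynomial.C_pow]
    exact Polynomial.monic_X_pow_sub_C _ (NeZero.ne m)
  have h := congrArg ev.mapMatrix (adjugate_eq_of_mul_eq_det_smul hmonic.isRegular.left
    ((cycleBlock_mul_cycleBlockAdj _ _).trans (by rw [det_cycleBlock])))
  rw [RingHom.map_adjugate, cycleBlock_map, cycleBlockAdj_map] at h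
  simpa [ev] using h

theorem cycleBlockAdj_self (w : R) : cycleBlockAdj m w w = of fun _ _ => w ^ (m - 1) := by
  ext h i
  rw [cycleBlockAdj, of_apply, of_apply, sum_eq_single (i - h).val]
  · rw [ZMod.natCast_zmod_val, add_sub_cancel, if_pos rfl, ← pow_add,
      Nat.sub_add_cancel (Nat.le_sub_one_of_lt (ZMod.val_lt _))]
  · intro t ht hne
    refine if_neg fun heq => hne ?_
    rw [heq, add_sub_cancel_left, ZMod.val_cast_of_lt (mem_range.mp ht)]
  · exact fun hmem => absurd (mem_range.mpr (ZMod.val_lt _)) hmem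

end CycleBlock

theorem ZMod.sum_comp_val {M : Type*} [AddCommMonoid M] {m : ℕ} [NeZero m] (f : ℕ → M) :
    ∑ i : ZMod m, f i.val = ∑ t ∈ range m, f t := by
  obtain ⟨M, rfl⟩ := Nat.exists_eq_succ_of_ne_zero (NeZero.ne m)
  exact Fin.sum_univ_eq_sum_range f (M + 1)

theorem sum_cConst_eq_zero {m : ℕ} [NeZero m] (F : ZMod m → ℂ) : ∑ i, cConst m F i = 0 := by
  have hm : (m : ℂ) ≠ 0 := Nat.cast_ne_zero.mpr (NeZero.ne m)
  have hflip : ∑ t ∈ range m, ∑ r ∈ range (t + 1), F r = ∑ s ∈ range m, ((m : ℂ) - s) * F s := by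
    have h := sum_range_diag_flip m fun r _ => F r
    simp only [sum_const, card_range, nsmul_eq_mul] at h
    rw [h]
    exact sum_congr rfl fun s hs => by rw [Nat.cast_sub (mem_range.mp hs).le]
  simp only [cConst, sum_sub_distrib, sum_const, card_univ, ZMod.card, nsmul_eq_mul, mul_sum]
  rw [ZMod.sum_comp_val (fun t => ∑ r ∈ range (t + 1), F r), hflip, sub_eq_zero]
  refine sum_congr rfl fun s _ => ?_
  field_simp

section Spin
variable (m n : ℕ) (lam : Fin n → ℂ)

theorem smul_one_sub_Ltilde (z : ℂ) :
    z • (1 : Matrix (ZMod m × Fin n) (ZMod m × Fin n) ℂ) - Ltilde m n lam =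
      blockDiagonal fun j => cycleBlock m z (lam j) := by
  ext ⟨h, j⟩ ⟨i, k⟩
  obtain rfl | hjk := eq_or_ne j k
  · obtain rfl | hih := eq_or_ne i h
    · simp [Ltilde, cycleBlock, one_apply]
    · simp [Ltilde, cycleBlock, one_apply, hih, hih.symm]
  · simp [Ltilde, one_apply, blockDiagonal_apply_ne _ _ _ hjk, hjk, hjk.symm]

variable [NeZero m]

theorem Afun_eq_prod (z : ℂ) : Afun m n lam z = ∏ j, (z ^ m - lam j ^ m) := by
  simp only [Afun, smul_one_sub_Ltilde, det_blockDiagonal, det_cycleBlock]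

theorem hasDerivAt_Afun (k : Fin n) :
    HasDerivAt (Afun m n lam)
      (m * (lam k ^ (m - 1) * ∏ j ∈ univ.erase k, (lam k ^ m - lam j ^ m))) (lam k) := by
  have h := HasDerivAt.fun_finsetProd (u := univ) (x := lam k)
    fun j _ => (hasDerivAt_pow m (lam k)).sub_const (lam j ^ m)
  rw [sum_eq_single k (fun j _ hj => by rw [prod_eq_zero (mem_erase.mpr ⟨hj.symm, mem_univ k⟩)
    (sub_self _), zero_smul]) (fun hk => absurd (mem_univ k) hk), smul_eq_mul, mul_comm,
    mul_assoc] at h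
  exact (funext (Afun_eq_prod m n lam)).symm ▸ h

theorem adjugate_lam_smul_one_sub_Ltilde (k : Fin n) :
    adjugate (lam k • (1 : Matrix (ZMod m × Fin n) (ZMod m × Fin n) ℂ) - Ltilde m n lam) =
      of fun p q => if p.2 = k ∧ q.2 = k then
        lam k ^ (m - 1) * ∏ j ∈ univ.erase k, (lam k ^ m - lam j ^ m) else 0 := by
  rw [smul_one_sub_Ltilde, adjugate_blockDiagonal]
  ext ⟨h, j⟩ ⟨i, j'⟩
  simp only [blockDiagonal_apply, det_cycleBlock, adjugate_cycleBlock, of_apply]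
  obtain rfl | hjj' := eq_or_ne j j'
  · obtain rfl | hjk := eq_or_ne j k
    · simp [cycleBlockAdj_self, mul_comm]
    · rw [prod_eq_zero (mem_erase.mpr ⟨hjk.symm, mem_univ k⟩) (sub_self _)]
      simp [hjk]
  · rw [if_neg hjj', if_neg fun h => hjj' (h.1.trans h.2.symm)]

theorem sum_QtildeS_diagBlock (g : ZMod m → ℂ) (phi : Fin n → ℂ)
    (V : ZMod m → Matrix (Fin n) (Fin n) ℂ) (k : Fin n) :
    ∑ h, ∑ i, QtildeS m n g lam phi V (h, k) (i, k) = m * phi k := by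
  have hcol : ∀ i : ZMod m, ∑ h, QtildeS m n g lam phi V (h, k) (i, k) =
      phi k + 1 / lam k * (cConst m g i + cConst m (fun s => V s k k) i) := by
    intro i
    simp [QtildeS, cConst, add_sub_assoc]
  rw [sum_comm, sum_congr rfl fun i _ => hcol i, sum_add_distrib, ← mul_sum, sum_add_distrib,
    sum_cConst_eq_zero, sum_cConst_eq_zero]
  simp

theorem DfunS_apply_lam (g : ZMod m → ℂ) (phi : Fin n → ℂ)
    (V : ZMod m → Matrix (Fin n) (Fin n) ℂ) (k : Fin n) :
    DfunS m n g lam phi V (lam k) =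
      m * phi k * (lam k ^ (m - 1) * ∏ j ∈ univ.erase k, (lam k ^ m - lam j ^ m)) := by
  rw [DfunS, adjugate_lam_smul_one_sub_Ltilde, ← sum_QtildeS_diagBlock m n lam g phi V k]
  simp [trace, mul_apply, Fintype.sum_prod_type, sum_mul, ite_and, sum_ite_irrel]

end Spin

theorem spin_phi_eq_D_div_A'_general (m n d : ℕ) [NeZero m]
    (lam phi : Fin n → ℂ) (g : ZMod m → ℂ)
    (hlam : ∀ j, lam j ≠ 0)
    (hsep : ∀ j k : Fin n, j ≠ k → lam j ^ m ≠ lam k ^ m)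
    (vt : ZMod m → Matrix (Fin n) (Fin d) ℂ) (wt : ZMod m → Matrix (Fin d) (Fin n) ℂ)
    (k : Fin n) :
    deriv (Afun m n lam) (lam k) ≠ 0 ∧
    DfunS m n g lam phi (fun i => vt i * wt i) (lam k) =
      phi k * deriv (Afun m n lam) (lam k) ∧
    phi k =
      DfunS m n g lam phi (fun i => vt i * wt i) (lam k) / deriv (Afun m n lam) (lam k) := by
  rw [(hasDerivAt_Afun m n lam k).deriv, DfunS_apply_lam]
  set α := lam k ^ (m - 1) * ∏ j ∈ univ.erase k, (lam k ^ m - lam j ^ m)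
  have hA' : (m : ℂ) * α ≠ 0 :=
    mul_ne_zero (Nat.cast_ne_zero.mpr (NeZero.ne m)) <| mul_ne_zero (pow_ne_zero _ (hlam k)) <|
      prod_ne_zero_iff.mpr fun j hj => sub_ne_zero.mpr (hsep k j (ne_of_mem_erase hj).symm)
  have hD : (m : ℂ) * phi k * α = phi k * (m * α) := by ring
  exact ⟨hA', hD, (eq_div_iff hA').mpr hD.symm⟩

/-- Spin case: for every `k`, `D(λₖ) = φₖ · A′(λₖ)`; equivalently, since
`A′(λₖ) ≠ 0`, `φₖ = D(λₖ)/A′(λₖ)`. -/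
theorem spin_phi_eq_D_div_A' (m n d : ℕ) [NeZero m] (hn : 0 < n) (hd : 0 < d)
    (lam phi : Fin n → ℂ) (g : ZMod m → ℂ)
    (hlam : ∀ j, lam j ≠ 0)
    (hsep : ∀ j k : Fin n, j ≠ k → lam j ^ m ≠ lam k ^ m)
    (vt : ZMod m → Matrix (Fin n) (Fin d) ℂ) (wt : ZMod m → Matrix (Fin d) (Fin n) ℂ)
    (hV : ∀ j : Fin n, ∑ i : ZMod m, (vt i * wt i) j j = gAbs m g) (k : Fin n) :
    deriv (Afun m n lam) (lam k) ≠ 0 ∧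
    DfunS m n g lam phi (fun i => vt i * wt i) (lam k) =
      phi k * deriv (Afun m n lam) (lam k) ∧
    phi k =
      DfunS m n g lam phi (fun i => vt i * wt i) (lam k) / deriv (Afun m n lam) (lam k) :=
  spin_phi_eq_D_div_A'_general m n d lam phi g hlam hsep vt wt k
end
end
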